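/- If in every reachable configuration of an OTIMAPP execution with paths {π_1,...,π_n} some agent not yet at its final clock can move (i.e., its next vertex is vacant) or all agents are at their final clocks, then every fair execution terminates; equivalently, non-termination of some fair execution implies the existence of a reachable configuration in which a nonempty set of unfinished agents each has its next vertex occupied by another unfinished agent or by a finished agent, and in the former case the waiting relation contains a cycle (a reachable cyclic deadlock) while in the latter case there is a reachable terminal deadlock. -/
import Mathlib


open scoped Classical

/-- An OTIMAPP path set: `n` agents, agent `i` follows the path
`loc i 0, loc i 1, ..., loc i (L i)`; `loc i 0` is its start and `loc i (L i)` its goal. -/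
structure OTI (V : Type) (n : ℕ) where
  L : Fin n → ℕ
  loc : Fin n → ℕ → V

namespace OTI

variable {V : Type} {n : ℕ}

/-- Activation of agent `i` in configuration `c` (clocks): the agent advances iff it is not
at the end of its path and its next vertex is unoccupied. -/
noncomputable def step (P : OTI V n) (c : Fin n → ℕ) (i : Fin n) : Fin n → ℕ :=
  if c i < P.L i ∧ ∀ j, j ≠ i → P.loc j (c j) ≠ P.loc i (c i + 1)
  then Function.update c i (c i + 1) else c

/-- Configuration after the first `k` activations of execution `e`. -/
noncomputable def run (P : OTI V n) (e : ℕ → Fin n) : ℕ → Fin n → ℕ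
  | 0 => fun _ => 0
  | k + 1 => P.step (P.run e k) (e k)

/-- An execution is fair when every agent is activated infinitely often. -/
def Fair (e : ℕ → Fin n) : Prop := ∀ (i : Fin n) (k : ℕ), ∃ m, k ≤ m ∧ e m = i

/-- All agents reach their goals after finitely many activations. -/
def Terminates (P : OTI V n) (e : ℕ → Fin n) : Prop :=
  ∃ k, ∀ i, P.run e k i = P.L i

/-- A feasible OTIMAPP solution: every fair execution terminates. -/
def Feasible (P : OTI V n) : Prop := ∀ e, Fair e → P.Terminates e

/-- A configuration (assignment of clocks) is reachable by some execution. -/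
def Reachable (P : OTI V n) (c : Fin n → ℕ) : Prop := ∃ e k, P.run e k = c

/-- A potential cyclic deadlock: distinct agents `σ 0, …, σ k` with clock values `t`
such that each agent's next vertex is the next agent's current vertex, cyclically. -/
def PotentialCyclic (P : OTI V n) {k : ℕ} (σ : Fin (k + 1) → Fin n)
    (t : Fin (k + 1) → ℕ) : Prop :=
  Function.Injective σ ∧ (∀ m, t m < P.L (σ m)) ∧
    ∀ m, P.loc (σ m) (t m + 1) = P.loc (σ (m + 1)) (t (m + 1))

/-- A reachable cyclic deadlock: a potential cyclic deadlock whose clock values are realized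
by some reachable configuration. -/
def ReachableCyclic (P : OTI V n) {k : ℕ} (σ : Fin (k + 1) → Fin n)
    (t : Fin (k + 1) → ℕ) : Prop :=
  P.PotentialCyclic σ t ∧ ∃ c, P.Reachable c ∧ ∀ m, c (σ m) = t m

/-- A potential terminal deadlock `(i, j, tj)`: agent `i`'s goal lies on `j`'s path. -/
def PotentialTerminal (P : OTI V n) (i j : Fin n) (tj : ℕ) : Prop :=
  i ≠ j ∧ tj ≤ P.L j ∧ P.loc i (P.L i) = P.loc j tj

/-- A reachable terminal deadlock: some execution puts `i` at its goal and `j` at clock `tj - 1`. -/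
def ReachableTerminal (P : OTI V n) (i j : Fin n) (tj : ℕ) : Prop :=
  P.PotentialTerminal i j tj ∧ ∃ c, P.Reachable c ∧ c i = P.L i ∧ c j + 1 = tj

/-- The path set is a set of paths on graph `G` with starts `s` and goals `g`. -/
def OnGraph (P : OTI V n) (G : SimpleGraph V) (s g : Fin n → V) : Prop :=
  (∀ i, P.loc i 0 = s i) ∧ (∀ i, P.loc i (P.L i) = g i) ∧
    ∀ i t, t < P.L i → G.Adj (P.loc i t) (P.loc i (t + 1))

/-- A fragment: a nonempty chain of (agent, clock) pairs with distinct agents, where each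
agent's next vertex equals the next agent's current vertex. -/
def IsFragment (P : OTI V n) (l : List (Fin n × ℕ)) : Prop :=
  l ≠ [] ∧ (l.map Prod.fst).Nodup ∧ (∀ p ∈ l, p.2 < P.L p.1) ∧
    l.Chain' fun p q => P.loc p.1 (p.2 + 1) = P.loc q.1 q.2

/-- The vertex a fragment starts from. -/
def fragStart (P : OTI V n) (l : List (Fin n × ℕ)) : Option V :=
  l.head?.map fun p => P.loc p.1 p.2

/-- The vertex a fragment ends at. -/
def fragEnd (P : OTI V n) (l : List (Fin n × ℕ)) : Option V :=
  l.getLast?.map fun p => P.loc p.1 (p.2 + 1)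

end OTI

namespace OTI

variable {V : Type} {n : ℕ}

lemma le_step (P : OTI V n) (c : Fin n → ℕ) (i j : Fin n) : c j ≤ P.step c i j := by
  unfold step
  split
  · rcases eq_or_ne j i with rfl | h
    · simp
    · simp [Function.update_of_ne h]
  · exact le_rfl

lemma step_le_L (P : OTI V n) (c : Fin n → ℕ) (i : Fin n) (h : ∀ j, c j ≤ P.L j)
    (j : Fin n) : P.step c i j ≤ P.L j := by
  unfold step
  split
  · rcases eq_or_ne j i with rfl | hne
    · simpa using (by omega : c j + 1 ≤ P.L j)
    · simpa [Function.update_of_ne hne] using h j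
  · exact h j

lemma run_le_L (P : OTI V n) (e : ℕ → Fin n) (k : ℕ) (j : Fin n) :
    P.run e k j ≤ P.L j := by
  induction k generalizing j with
  | zero => simp [run]
  | succ k ih => exact P.step_le_L _ _ (fun j => ih j) j

lemma run_mono (P : OTI V n) (e : ℕ → Fin n) (j : Fin n) :
    Monotone fun k => P.run e k j :=
  monotone_nat_of_le_succ fun k => P.le_step _ _ _

lemma sum_run_mono (P : OTI V n) (e : ℕ → Fin n) :
    Monotone fun k => ∑ j, P.run e k j :=
  monotone_nat_of_le_succ fun k =>
    Finset.sum_le_sum fun j _ => P.le_step _ _ _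

lemma progress (P : OTI V n)
    (H : ∀ c : Fin n → ℕ, P.Reachable c →
        (∀ i, c i = P.L i) ∨
        ∃ i, c i < P.L i ∧ ∀ j, j ≠ i → P.loc j (c j) ≠ P.loc i (c i + 1))
    (e : ℕ → Fin n) (he : Fair e) (k : ℕ)
    (hnt : ∃ i, P.run e k i ≠ P.L i) :
    ∃ m, (∑ j, P.run e k j) < ∑ j, P.run e m j := by
  rcases H (P.run e k) ⟨e, k, rfl⟩ with hall | ⟨i, hi, hfree⟩
  · obtain ⟨i, hi⟩ := hnt; exact absurd (hall i) hi
  obtain ⟨m, hkm, hem⟩ := he i k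
  have hle' : (∑ j, P.run e k j) ≤ ∑ j, P.run e m j := P.sum_run_mono e hkm
  rcases lt_or_eq_of_le hle' with hlt | heq
  · exact ⟨m, hlt⟩
  · have hrun : P.run e m = P.run e k := by
      funext j
      by_contra hne
      have hj : P.run e k j < P.run e m j :=
        lt_of_le_of_ne (P.run_mono e j hkm) (Ne.symm hne)
      have : (∑ j, P.run e k j) < ∑ j, P.run e m j :=
        Finset.sum_lt_sum (fun j _ => P.run_mono e j hkm) ⟨j, Finset.mem_univ j, hj⟩
      omega
    refine ⟨m + 1, ?_⟩
    have hstep : P.run e (m + 1) i = P.run e m i + 1 := by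
      show P.step (P.run e m) (e m) i = _
      rw [hem, hrun]
      unfold step
      rw [if_pos ⟨hi, hfree⟩]
      simp
    rw [heq]
    refine Finset.sum_lt_sum (fun j _ => P.le_step _ _ _) ⟨i, Finset.mem_univ i, ?_⟩
    show P.run e m i < P.run e (m + 1) i
    omega

end OTI

/-- (a) if in every reachable configuration either all agents are finished or
some unfinished agent can move, then every fair execution terminates; (b) if some fair
execution does not terminate, then there is a reachable configuration with a nonempty set of
unfinished agents, each blocked by the occupant of its next vertex; if all blockers are
unfinished then the waiting relation contains a cycle (a potential cyclic deadlock realized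
at that configuration, hence reachable), and if some blocker is finished then there is a
reachable terminal deadlock. -/
theorem blocking_characterization {V : Type} {n : ℕ} (P : OTI V n) :
    ((∀ c : Fin n → ℕ, P.Reachable c →
        (∀ i, c i = P.L i) ∨
        ∃ i, c i < P.L i ∧ ∀ j, j ≠ i → P.loc j (c j) ≠ P.loc i (c i + 1)) →
      ∀ e, OTI.Fair e → P.Terminates e) ∧
    ((∃ e, OTI.Fair e ∧ ¬ P.Terminates e) →
      ∃ c : Fin n → ℕ, P.Reachable c ∧ (∃ i, c i < P.L i) ∧
        (∀ i, c i < P.L i → ∃ j, j ≠ i ∧ P.loc j (c j) = P.loc i (c i + 1)) ∧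
        ((∀ i, c i < P.L i →
            ∃ j, j ≠ i ∧ c j < P.L j ∧ P.loc j (c j) = P.loc i (c i + 1)) →
          ∃ (k : ℕ) (σ : Fin (k + 1) → Fin n) (t : Fin (k + 1) → ℕ),
            P.PotentialCyclic σ t ∧ ∀ m, c (σ m) = t m) ∧
        ((∃ i j, c i < P.L i ∧ c j = P.L j ∧ P.loc j (c j) = P.loc i (c i + 1)) →
          ∃ (i j : Fin n) (tj : ℕ), P.ReachableTerminal i j tj)) := by
  have ha : (∀ c : Fin n → ℕ, P.Reachable c →
        (∀ i, c i = P.L i) ∨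
        ∃ i, c i < P.L i ∧ ∀ j, j ≠ i → P.loc j (c j) ≠ P.loc i (c i + 1)) →
      ∀ e, OTI.Fair e → P.Terminates e := by
    intro H e he
    by_contra hnt
    rw [OTI.Terminates] at hnt
    push_neg at hnt
    have key : ∀ d, ∃ k, d ≤ ∑ j, P.run e k j := by
      intro d
      induction d with
      | zero => exact ⟨0, Nat.zero_le _⟩
      | succ d ih =>
        obtain ⟨k, hk⟩ := ih
        obtain ⟨m, hm⟩ := P.progress H e he k (hnt k)
        exact ⟨m, by omega⟩
    obtain ⟨k, hk⟩ := key (∑ j, P.L j + 1)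
    have hb : ∑ j, P.run e k j ≤ ∑ j, P.L j :=
      Finset.sum_le_sum fun j _ => P.run_le_L e k j
    omega
  refine ⟨ha, ?_⟩
  rintro ⟨e, he, hnt⟩
  have hH : ¬ (∀ c : Fin n → ℕ, P.Reachable c →
        (∀ i, c i = P.L i) ∨
        ∃ i, c i < P.L i ∧ ∀ j, j ≠ i → P.loc j (c j) ≠ P.loc i (c i + 1)) :=
    fun H => hnt (ha H e he)
  push_neg at hH
  obtain ⟨c, hc, ⟨⟨i1, hi1⟩, hblk⟩⟩ := hH
  have hle : ∀ i, c i ≤ P.L i := by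
    obtain ⟨e', k', hrk⟩ := hc
    intro i; rw [← hrk]; exact P.run_le_L e' k' i
  have hex : ∃ i, c i < P.L i := ⟨i1, lt_of_le_of_ne (hle i1) hi1⟩
  have hblk' : ∀ i, c i < P.L i → ∃ j, j ≠ i ∧ P.loc j (c j) = P.loc i (c i + 1) := by
    intro i hi
    obtain ⟨j, hj⟩ := hblk i hi
    exact ⟨j, by tauto⟩
  refine ⟨c, hc, hex, hblk', ?_, ?_⟩
  · -- cyclic case
    intro hall
    obtain ⟨i0, hi0⟩ := hex
    choose F hF1 hF2 hF3 using hall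
    let f : Fin n → Fin n := fun i => if h : c i < P.L i then F i h else i
    have hf1 : ∀ i (h : c i < P.L i), f i ≠ i := by
      intro i h; simp only [f, dif_pos h]; exact hF1 i h
    have hf2 : ∀ i (h : c i < P.L i), c (f i) < P.L (f i) := by
      intro i h; simp only [f, dif_pos h]; exact hF2 i h
    have hf3 : ∀ i (h : c i < P.L i), P.loc (f i) (c (f i)) = P.loc i (c i + 1) := by
      intro i h; simp only [f, dif_pos h]; exact hF3 i h
    set g : ℕ → Fin n := fun m => f^[m] i0 with hgdef
    have hgs : ∀ m, g (m + 1) = f (g m) := fun m => Function.iterate_succ_apply' f m i0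
    have hg : ∀ m, c (g m) < P.L (g m) := by
      intro m
      induction m with
      | zero => exact hi0
      | succ m ih => rw [hgs m]; exact hf2 _ ih
    have hrep : ∃ b, ∃ a, a < b ∧ g a = g b := by
      have hcard : Fintype.card (Fin n) < Fintype.card (Fin (n + 1)) := by simp
      obtain ⟨x, y, hxy, hgxy⟩ :=
        Fintype.exists_ne_map_eq_of_card_lt (fun m : Fin (n + 1) => g m) hcard
      have hxyv : (x : ℕ) ≠ (y : ℕ) := fun h => hxy (Fin.ext h)
      rcases hxyv.lt_or_gt with h | h
      · exact ⟨y, x, h, hgxy⟩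
      · exact ⟨x, y, h, hgxy.symm⟩
    set b := Nat.find hrep with hbdef
    obtain ⟨a, hab, hgab⟩ := Nat.find_spec hrep
    set k := b - a - 1 with hkdef
    have hbak : b = a + k + 1 := by omega
    refine ⟨k, fun m => g (a + m.val), fun m => c (g (a + m.val)), ⟨?_, ?_, ?_⟩, fun m => rfl⟩
    · -- injectivity
      have key : ∀ m1 m2 : Fin (k + 1), (m1 : ℕ) < (m2 : ℕ) →
          g (a + m1.val) ≠ g (a + m2.val) := by
        intro m1 m2 hlt heq
        have hm2 : a + m2.val < b := by
          have := m2.isLt; omega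
        exact Nat.find_min hrep hm2 ⟨a + m1.val, by omega, heq⟩
      intro m1 m2 heq
      by_contra hne
      have hne' : (m1 : ℕ) ≠ (m2 : ℕ) := fun h => hne (Fin.ext h)
      rcases hne'.lt_or_gt with h | h
      · exact key m1 m2 h heq
      · exact key m2 m1 h heq.symm
    · intro m; exact hg _
    · intro m
      have hnext : g (a + ((m + 1 : Fin (k + 1)) : ℕ)) = f (g (a + m.val)) := by
        rcases eq_or_ne (m : ℕ) k with hmk | hmk
        · have h1 : ((m + 1 : Fin (k + 1)) : ℕ) = 0 := by
            have : (m + 1 : Fin (k + 1)) = 0 := by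
              have : m = Fin.last k := Fin.ext (by simpa using hmk)
              rw [this]
              exact Fin.last_add_one k
            rw [this]; rfl
          rw [h1]
          have : f (g (a + m.val)) = g (a + m.val + 1) := (hgs _).symm
          rw [this]
          have : a + m.val + 1 = b := by omega
          rw [this]
          simpa using hgab
        · have hmlt : (m : ℕ) + 1 < k + 1 := by have := m.isLt; omega
          have h1 : ((m + 1 : Fin (k + 1)) : ℕ) = (m : ℕ) + 1 := by
            rw [Fin.val_add_one_of_lt (by
              rw [Fin.lt_iff_val_lt_val, Fin.val_last]; omega)]
          rw [h1, show a + ((m : ℕ) + 1) = (a + m.val) + 1 by omega, hgs]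
      show P.loc (g (a + m.val)) (c (g (a + m.val)) + 1) =
        P.loc (g (a + ((m + 1 : Fin (k + 1)) : ℕ))) (c (g (a + ((m + 1 : Fin (k + 1)) : ℕ))))
      rw [hnext]
      exact (hf3 _ (hg (a + m.val))).symm
  · -- terminal case
    rintro ⟨i, j, hi, hj, heq⟩
    have hji : j ≠ i := by rintro rfl; omega
    exact ⟨j, i, c i + 1, ⟨hji, by omega, by rw [← hj]; exact heq⟩, c, hc, hj, rfl⟩
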